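/- Let f, g, h be the monoid endomorphisms of the free monoid on {0,1} determined by f: 0 ↦ 01, 1 ↦ 0; g: 0 ↦ 01, 1 ↦ 011; and h: 0 ↦ 01, 1 ↦ 001. Then for every k ≥ 0 and every word w over {0,1}, h(g^k(w)) = f^{2k}(h(w)). -/
import Mathlib

open FreeMonoid

/-- The Fibonacci morphism `f : 0 ↦ 01, 1 ↦ 0`. -/
def fmor : FreeMonoid (Fin 2) →* FreeMonoid (Fin 2) :=
  FreeMonoid.lift fun i => if i = 0 then of 0 * of 1 else of 0

/-- The morphism `g : 0 ↦ 01, 1 ↦ 011`. -/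
def gmor : FreeMonoid (Fin 2) →* FreeMonoid (Fin 2) :=
  FreeMonoid.lift fun i => if i = 0 then of 0 * of 1 else of 0 * of 1 * of 1

/-- The morphism `h : 0 ↦ 01, 1 ↦ 001`. -/
def hmor : FreeMonoid (Fin 2) →* FreeMonoid (Fin 2) :=
  FreeMonoid.lift fun i => if i = 0 then of 0 * of 1 else of 0 * of 0 * of 1

lemma key (w : FreeMonoid (Fin 2)) : hmor (gmor w) = fmor (fmor (hmor w)) := by
  have : (hmor.comp gmor) = (fmor.comp (fmor.comp hmor)) := by
    apply FreeMonoid.hom_eq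
    intro i
    fin_cases i <;> rfl
  exact DFunLike.congr_fun this w

/-- For every `k ≥ 0` and every word `w` over `{0,1}`: `h(gᵏ(w)) = f²ᵏ(h(w))`. -/
theorem h_g_pow_eq_f_pow_h (k : ℕ) (w : FreeMonoid (Fin 2)) :
    hmor ((⇑gmor)^[k] w) = (⇑fmor)^[2 * k] (hmor w) := by
  induction k generalizing w with
  | zero => simp
  | succ n ih =>
    rw [Function.iterate_succ_apply, ih (gmor w), key,
      show 2 * (n + 1) = 2 * n + 1 + 1 by ring,
      ← Function.iterate_succ_apply, ← Function.iterate_succ_apply,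
      Function.iterate_succ_apply', Function.iterate_succ_apply']
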